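/- Let (X, ‖·‖_X) be a normed space whose dual X* is separable, and let Φ = (φ_k)_{k≥1} and Ψ = (ψ_k)_{k≥1} be two sequences, each dense in the closed unit ball of X*. Define |u|_Φ := Σ_{k=1}^∞ 2^{−k}|⟨φ_k, u⟩| and |u|_Ψ := Σ_{k=1}^∞ 2^{−k}|⟨ψ_k, u⟩|. Then for every ε > 0 there exists a constant C > 0 such that |u|_Ψ ≤ ε‖u‖_X + C|u|_Φ for all u ∈ X. -/

import Mathlib

/-- The very weak norm associated with a sequence `Φ` in the dual:
`|u|_Φ = Σ_{k=1}^∞ 2^{-k} |⟨φ_k, u⟩|` (indexed here from `k = 0` with weight `2^{-(k+1)}`). -/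
noncomputable def veryWeakNorm {X : Type*} [NormedAddCommGroup X] [NormedSpace ℝ X]
    (Φ : ℕ → StrongDual ℝ X) (u : X) : ℝ :=
  ∑' k : ℕ, (2 : ℝ)⁻¹ ^ (k + 1) * |Φ k u|

lemma vwn_summable {X : Type*} [NormedAddCommGroup X] [NormedSpace ℝ X]
    (Φ : ℕ → StrongDual ℝ X) (hΦ : ∀ k, ‖Φ k‖ ≤ 1) (u : X) :
    Summable fun k : ℕ => (2 : ℝ)⁻¹ ^ (k + 1) * |Φ k u| := by
  have hg : Summable fun k : ℕ => (2 : ℝ)⁻¹ ^ (k + 1) * ‖u‖ := by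
    have : Summable fun k : ℕ => (2 : ℝ)⁻¹ ^ k := summable_geometric_of_lt_one (by norm_num) (by norm_num)
    simpa [pow_succ, mul_comm, mul_assoc, mul_left_comm] using (this.mul_left (2:ℝ)⁻¹).mul_right ‖u‖
  refine Summable.of_nonneg_of_le (fun k => by positivity) (fun k => ?_) hg
  have h1 : |Φ k u| ≤ ‖u‖ := by
    have := (Φ k).le_opNorm u
    calc |Φ k u| = ‖Φ k u‖ := (Real.norm_eq_abs _).symm
    _ ≤ ‖Φ k‖ * ‖u‖ := this
    _ ≤ 1 * ‖u‖ := by gcongr; exact hΦ k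
    _ = ‖u‖ := one_mul _
  have : (0:ℝ) ≤ (2:ℝ)⁻¹ ^ (k+1) := by positivity
  exact mul_le_mul_of_nonneg_left h1 this

lemma vwn_nonneg {X : Type*} [NormedAddCommGroup X] [NormedSpace ℝ X]
    (Φ : ℕ → StrongDual ℝ X) (u : X) : 0 ≤ veryWeakNorm Φ u :=
  tsum_nonneg fun k => by positivity

lemma vwn_term_le {X : Type*} [NormedAddCommGroup X] [NormedSpace ℝ X]
    (Φ : ℕ → StrongDual ℝ X) (hΦ : ∀ k, ‖Φ k‖ ≤ 1) (u : X) (j : ℕ) :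
    |Φ j u| ≤ 2 ^ (j + 1) * veryWeakNorm Φ u := by
  have h := Summable.le_tsum (vwn_summable Φ hΦ u) j (fun k _ => by positivity)
  have h2 : (2:ℝ)⁻¹ ^ (j+1) * |Φ j u| ≤ veryWeakNorm Φ u := h
  calc |Φ j u| = 2 ^ (j+1) * ((2:ℝ)⁻¹ ^ (j+1) * |Φ j u|) := by
        rw [← mul_assoc, ← mul_pow]; norm_num
  _ ≤ 2 ^ (j+1) * veryWeakNorm Φ u := by gcongr


/-- Very weak norms associated with two dense sequences `Φ`, `Ψ` in the
closed unit ball of `X*` are Ehrling-equivalent: for every `ε > 0` there is `C > 0` with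
`|u|_Ψ ≤ ε ‖u‖_X + C |u|_Φ` for all `u ∈ X`. -/
theorem veryWeakNorms_ehrling_equivalent
    {X : Type*} [NormedAddCommGroup X] [NormedSpace ℝ X]
    [TopologicalSpace.SeparableSpace (StrongDual ℝ X)]
    (Φ Ψ : ℕ → StrongDual ℝ X)
    (hΦball : ∀ k, ‖Φ k‖ ≤ 1)
    (hΦdense : ∀ φ : StrongDual ℝ X, ‖φ‖ ≤ 1 → φ ∈ closure (Set.range Φ))
    (hΨball : ∀ k, ‖Ψ k‖ ≤ 1)
    (hΨdense : ∀ φ : StrongDual ℝ X, ‖φ‖ ≤ 1 → φ ∈ closure (Set.range Ψ)) :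
    ∀ ε > (0 : ℝ), ∃ C > (0 : ℝ), ∀ u : X,
      veryWeakNorm Ψ u ≤ ε * ‖u‖ + C * veryWeakNorm Φ u := by
  intro ε hε
  -- choose N with 2^{-N} ≤ ε/2
  obtain ⟨N, hN⟩ : ∃ N : ℕ, (2:ℝ)⁻¹ ^ N < ε / 2 :=
    exists_pow_lt_of_lt_one (by linarith) (by norm_num)
  -- choose approximations
  have hchoice : ∀ k : ℕ, ∃ j : ℕ, ‖Ψ k - Φ j‖ < ε / 2 := by
    intro k
    have hmem := hΨball k
    have := hΦdense (Ψ k) hmem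
    rw [Metric.mem_closure_iff] at this
    obtain ⟨b, ⟨j, rfl⟩, hb⟩ := this (ε/2) (by linarith)
    exact ⟨j, by simpa [dist_eq_norm] using hb⟩
  choose j hj using hchoice
  refine ⟨1 + ∑ k ∈ Finset.range N, (2:ℝ) ^ (j k), by positivity, fun u => ?_⟩
  have hSumΨ := vwn_summable Ψ hΨball u
  -- split
  have hsplit : veryWeakNorm Ψ u = (∑ k ∈ Finset.range N, (2:ℝ)⁻¹ ^ (k + 1) * |Ψ k u|)
      + ∑' k : ℕ, (2:ℝ)⁻¹ ^ (k + N + 1) * |Ψ (k + N) u| := by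
    have := (Summable.sum_add_tsum_nat_add (f := fun k : ℕ => (2:ℝ)⁻¹ ^ (k + 1) * |Ψ k u|) N hSumΨ).symm
    simpa [veryWeakNorm] using this
  have hu : ∀ k, |Ψ k u| ≤ ‖u‖ := by
    intro k
    calc |Ψ k u| = ‖Ψ k u‖ := (Real.norm_eq_abs _).symm
    _ ≤ ‖Ψ k‖ * ‖u‖ := (Ψ k).le_opNorm u
    _ ≤ 1 * ‖u‖ := by gcongr; exact hΨball k
    _ = ‖u‖ := one_mul _
  -- tail bound
  have htail : (∑' k : ℕ, (2:ℝ)⁻¹ ^ (k + N + 1) * |Ψ (k + N) u|) ≤ ε / 2 * ‖u‖ := by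
    have hg : Summable fun k : ℕ => (2:ℝ)⁻¹ ^ (k + N + 1) * ‖u‖ := by
      have : Summable fun k : ℕ => (2 : ℝ)⁻¹ ^ k := summable_geometric_of_lt_one (by norm_num) (by norm_num)
      simpa [pow_add, mul_comm, mul_assoc, mul_left_comm] using
        ((this.mul_right ((2:ℝ)⁻¹ ^ (N+1))).mul_right ‖u‖)
    calc (∑' k : ℕ, (2:ℝ)⁻¹ ^ (k + N + 1) * |Ψ (k + N) u|)
        ≤ ∑' k : ℕ, (2:ℝ)⁻¹ ^ (k + N + 1) * ‖u‖ := by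
          refine Summable.tsum_le_tsum (fun k => ?_) (hSumΨ.comp_injective (add_left_injective N)) hg
          exact mul_le_mul_of_nonneg_left (hu _) (by positivity)
    _ = (∑' k : ℕ, (2:ℝ)⁻¹ ^ k) * ((2:ℝ)⁻¹ ^ (N+1) * ‖u‖) := by
          rw [← tsum_mul_right]
          congr 1; funext k; ring
    _ = 2 * ((2:ℝ)⁻¹ ^ (N+1) * ‖u‖) := by rw [tsum_geometric_of_lt_one (by norm_num) (by norm_num)]; norm_num
    _ = (2:ℝ)⁻¹ ^ N * ‖u‖ := by rw [pow_succ]; ring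
    _ ≤ ε / 2 * ‖u‖ := mul_le_mul_of_nonneg_right hN.le (norm_nonneg u)
  -- head bound
  have hhead : (∑ k ∈ Finset.range N, (2:ℝ)⁻¹ ^ (k + 1) * |Ψ k u|)
      ≤ ε / 2 * ‖u‖ + (∑ k ∈ Finset.range N, (2:ℝ) ^ (j k)) * veryWeakNorm Φ u := by
    have hterm : ∀ k, |Ψ k u| ≤ ε / 2 * ‖u‖ + |Φ (j k) u| := by
      intro k
      have : |Ψ k u - Φ (j k) u| ≤ ε / 2 * ‖u‖ := by
        calc |Ψ k u - Φ (j k) u| = ‖(Ψ k - Φ (j k)) u‖ := by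
              simp [Real.norm_eq_abs]
        _ ≤ ‖Ψ k - Φ (j k)‖ * ‖u‖ := (Ψ k - Φ (j k)).le_opNorm u
        _ ≤ ε / 2 * ‖u‖ := mul_le_mul_of_nonneg_right (hj k).le (norm_nonneg u)
      have habs : |Ψ k u| ≤ |Ψ k u - Φ (j k) u| + |Φ (j k) u| := by
        have := abs_add_le (Ψ k u - Φ (j k) u) (Φ (j k) u)
        simpa using this
      linarith
    calc (∑ k ∈ Finset.range N, (2:ℝ)⁻¹ ^ (k + 1) * |Ψ k u|)
        ≤ ∑ k ∈ Finset.range N, (2:ℝ)⁻¹ ^ (k + 1) * (ε / 2 * ‖u‖ + |Φ (j k) u|) := by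
          refine Finset.sum_le_sum fun k _ => ?_
          exact mul_le_mul_of_nonneg_left (hterm k) (by positivity)
    _ = (∑ k ∈ Finset.range N, (2:ℝ)⁻¹ ^ (k + 1)) * (ε / 2 * ‖u‖)
        + ∑ k ∈ Finset.range N, (2:ℝ)⁻¹ ^ (k + 1) * |Φ (j k) u| := by
          rw [Finset.sum_mul, ← Finset.sum_add_distrib]
          exact Finset.sum_congr rfl fun k _ => by ring
    _ ≤ 1 * (ε / 2 * ‖u‖) + ∑ k ∈ Finset.range N, (2:ℝ) ^ (j k) * veryWeakNorm Φ u := by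
          have hw : (∑ k ∈ Finset.range N, (2:ℝ)⁻¹ ^ (k + 1)) ≤ 1 := by
            calc (∑ k ∈ Finset.range N, (2:ℝ)⁻¹ ^ (k + 1))
                ≤ ∑' k : ℕ, (2:ℝ)⁻¹ ^ (k + 1) := by
                  refine Summable.sum_le_tsum _ (fun k _ => by positivity) ?_
                  have : Summable fun k : ℕ => (2 : ℝ)⁻¹ ^ k :=
                    summable_geometric_of_lt_one (by norm_num) (by norm_num)
                  simpa [pow_succ, mul_comm] using this.mul_right (2:ℝ)⁻¹
            _ = (∑' k : ℕ, (2:ℝ)⁻¹ ^ k) * (2:ℝ)⁻¹ := by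
                  rw [← tsum_mul_right]; exact tsum_congr fun k => pow_succ _ _
            _ = 1 := by
                  rw [tsum_geometric_of_lt_one (by norm_num) (by norm_num)]; norm_num
          refine add_le_add (mul_le_mul_of_nonneg_right hw (by positivity))
            (Finset.sum_le_sum fun k _ => ?_)
          calc (2:ℝ)⁻¹ ^ (k + 1) * |Φ (j k) u|
              ≤ (2:ℝ)⁻¹ ^ (k + 1) * ((2:ℝ) ^ (j k + 1) * veryWeakNorm Φ u) :=
                mul_le_mul_of_nonneg_left (vwn_term_le Φ hΦball u (j k)) (by positivity)
          _ ≤ (2:ℝ)⁻¹ ^ 1 * ((2:ℝ) ^ (j k + 1) * veryWeakNorm Φ u) := by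
                refine mul_le_mul_of_nonneg_right ?_
                  (mul_nonneg (by positivity) (vwn_nonneg Φ u))
                exact pow_le_pow_of_le_one (by norm_num) (by norm_num) (by omega)
          _ = (2:ℝ) ^ (j k) * veryWeakNorm Φ u := by rw [pow_one, pow_succ]; ring
    _ = ε / 2 * ‖u‖ + (∑ k ∈ Finset.range N, (2:ℝ) ^ (j k)) * veryWeakNorm Φ u := by
          rw [Finset.sum_mul]; ring
  have hV := vwn_nonneg Φ u
  have hring : (1 + ∑ k ∈ Finset.range N, (2:ℝ) ^ (j k)) * veryWeakNorm Φ u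
      = veryWeakNorm Φ u + (∑ k ∈ Finset.range N, (2:ℝ) ^ (j k)) * veryWeakNorm Φ u := by ring
  rw [hsplit]
  linarith
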